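/- Let u be the unique single-interface solution with initial datum u(0) ∈ X_1. Then: (i) for any k ≥ 1 with t_k^* < ∞ one has u_k(t_k^*) = u_*, u̇_k(t_k^*) > 0, and t_{k+1}^* - t_k^* ≥ C for a constant C > 0 depending only on Φ and the initial data; (ii) at any time t > 0 with u_k(t) = -u_* and u̇_k(t) ≥ 0 the spinodal entrance condition u_{k-1}(t) > u_{**} holds. -/

import Mathlib

open MeasureTheory Filter Set
open scoped Classical Topology NNReal

noncomputable section

/-- Forward difference on ℤ. -/
def fd (v : ℤ → ℝ) (j : ℤ) : ℝ := v (j + 1) - v j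

/-- Discrete Laplacian on ℤ. -/
def lap (v : ℤ → ℝ) (j : ℤ) : ℝ := v (j + 1) + v (j - 1) - 2 * v j

def uStar (κ : ℝ) : ℝ := 1 / (1 + κ)

def pStar (κ : ℝ) : ℝ := κ / (1 + κ)

def uStarStar (κ : ℝ) : ℝ := (1 + 2 * κ) / (1 + κ)

/-- The trilinear constitutive function Φ'. -/
def Phi' (κ u : ℝ) : ℝ :=
  if u ≤ -uStar κ then u + 1
  else if uStar κ ≤ u then u - 1
  else -κ * u

/-- The double-well energy Φ. -/
def Phi (κ u : ℝ) : ℝ :=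
  if u ≤ -uStar κ then (u + 1) ^ 2 / 2
  else if uStar κ ≤ u then (u - 1) ^ 2 / 2
  else (pStar κ - κ * u ^ 2) / 2

/-- The single-interface state space X_k. -/
def memX (κ : ℝ) (k : ℤ) (u : ℤ → ℝ) : Prop :=
  (∃ c, uStar κ < c ∧ ∀ j, j < k → c ≤ u j) ∧
  (∃ C, ∀ j, j < k → u j ≤ C) ∧
  (∃ c, -uStarStar κ < c ∧ ∀ j, k < j → c ≤ u j) ∧
  (∃ C, C < -uStar κ ∧ ∀ j, k < j → u j ≤ C) ∧
  -uStarStar κ < u k ∧ u k < uStar κ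

/-- `u` is a bounded (ℓ^∞-valued) solution of the lattice ODE u̇_j = Δ Φ'(u_j) for t ≥ 0. -/
def LatticeSol (κ : ℝ) (u : ℝ → ℤ → ℝ) : Prop :=
  (∀ t : ℝ, 0 ≤ t → ∀ j : ℤ,
      HasDerivAt (fun s => u s j) (lap (fun i => Phi' κ (u t i)) j) t) ∧
  (∀ t : ℝ, 0 ≤ t → ∃ C : ℝ, ∀ j : ℤ, |u t j| ≤ C)

/-- A single-interface solution with phase transition times `tstar` (with `tstar 0 = 0`);
the value `⊤ : WithTop ℝ` encodes `∞`. -/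
structure IsSIS (κ : ℝ) (u : ℝ → ℤ → ℝ) (tstar : ℕ → WithTop ℝ) : Prop where
  sol : LatticeSol κ u
  t0 : tstar 0 = 0
  pos : ∀ k : ℕ, 1 ≤ k → 0 < tstar k
  mono : Monotone tstar
  step : ∀ k : ℕ, 1 ≤ k → tstar k = ⊤ ∨ tstar k < tstar (k + 1)
  phase : ∀ k : ℕ, 1 ≤ k → tstar (k - 1) ≠ ⊤ →
    ∀ t : ℝ, tstar (k - 1) < (t : WithTop ℝ) → (t : WithTop ℝ) < tstar k →
      memX κ (k : ℤ) (u t)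

/-- The real value of a finite phase transition time (junk value `0` for `⊤`). -/
def tkr (tstar : ℕ → WithTop ℝ) (k : ℕ) : ℝ := (tstar k).untopD 0

/-- First spinodal entrance time t_k^#. -/
def tsharp (κ : ℝ) (u : ℝ → ℤ → ℝ) (tstar : ℕ → WithTop ℝ) (k : ℕ) : ℝ :=
  sInf {t : ℝ | tstar (k - 1) < (t : WithTop ℝ) ∧ -uStar κ < u t (k : ℤ)}

/-- Final spinodal entrance time t_k^♭. -/
def tflat (κ : ℝ) (u : ℝ → ℤ → ℝ) (tstar : ℕ → WithTop ℝ) (k : ℕ) : ℝ :=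
  sInf {t : ℝ | tsharp κ u tstar k ≤ t ∧ ∀ s : ℝ, t < s → -uStar κ < u s (k : ℤ)}

/-- The discrete heat kernel on ℤ. -/
def IsHeatKernel (g : ℝ → ℤ → ℝ) : Prop :=
  (∀ j : ℤ, g 0 j = if j = 0 then 1 else 0) ∧
  (∀ t : ℝ, ∀ j : ℤ, HasDerivAt (fun s => g s j) (lap (g t) j) t) ∧
  (∀ t : ℝ, 0 ≤ t → Summable fun j : ℤ => |g t j|)

/-- The diffusive part q^{(k)}. -/
def qf (κ : ℝ) (u : ℝ → ℤ → ℝ) (tstar : ℕ → WithTop ℝ) (g : ℝ → ℤ → ℝ)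
    (k : ℕ) (t : ℝ) (j : ℤ) : ℝ :=
  if t < tsharp κ u tstar k then 0
  else ∑' n : ℤ, g (t - tsharp κ u tstar k) (j - n) * Phi' κ (u (tsharp κ u tstar k) n)

/-- The k-th spinodal fluctuation r^{(k)}. -/
def rf (κ : ℝ) (u : ℝ → ℤ → ℝ) (tstar : ℕ → WithTop ℝ) (g : ℝ → ℤ → ℝ)
    (k : ℕ) (t : ℝ) (j : ℤ) : ℝ :=
  if t ≤ tsharp κ u tstar k then 0
  else if (t : WithTop ℝ) ≤ tstar k then -Phi' κ (u t j) + qf κ u tstar g k t j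
  else ∑' n : ℤ, g (t - tkr tstar k) (j - n) *
        (-Phi' κ (u (tkr tstar k) n) + qf κ u tstar g k (tkr tstar k) n)

/-- The quantity D_k. -/
def Dk (κ : ℝ) (u : ℝ → ℤ → ℝ) (tstar : ℕ → WithTop ℝ) (g : ℝ → ℤ → ℝ) (k : ℕ) : ℝ :=
  ∫ s in (tsharp κ u tstar k)..(tkr tstar k),
    |deriv (fun r => qf κ u tstar g k r (k : ℤ)) s|

/-- The universal impact profile ϱ. -/
def rho (κ : ℝ) (j : ℤ) : ℝ := 2 * pStar κ / (1 + 2 * κ) ^ j.natAbs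

/-- The essential fluctuation r_ess^{(k)}. -/
def ress (κ : ℝ) (tstar : ℕ → WithTop ℝ) (g : ℝ → ℤ → ℝ) (k : ℕ) (t : ℝ) (j : ℤ) : ℝ :=
  if tstar k ≤ (t : WithTop ℝ) then
    ∑' n : ℤ, g (t - tkr tstar k) (j - n) * rho κ (n - (k : ℤ))
  else 0

/-- The negligible fluctuation r_¬^{(k)}. -/
def rneg (κ : ℝ) (u : ℝ → ℤ → ℝ) (tstar : ℕ → WithTop ℝ) (g : ℝ → ℤ → ℝ)
    (k : ℕ) (t : ℝ) (j : ℤ) : ℝ :=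
  rf κ u tstar g k t j - ress κ tstar g k t j

/-- The residual fluctuation r_res^{(k)} (with cut-off parameter d and scaling ε). -/
def rres (κ : ℝ) (tstar : ℕ → WithTop ℝ) (g : ℝ → ℤ → ℝ) (k : ℕ) (d ε : ℝ)
    (t : ℝ) (j : ℤ) : ℝ :=
  if tkr tstar k ≤ t ∧ t < tkr tstar k + d / ε then ress κ tstar g k t j else 0

/-- The regular fluctuation r_reg^{(k)} (with cut-off parameter d, scaling ε, final time tfin). -/
def rreg (κ : ℝ) (tstar : ℕ → WithTop ℝ) (g : ℝ → ℤ → ℝ) (k : ℕ) (d ε tfin : ℝ)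
    (t : ℝ) (j : ℤ) : ℝ :=
  if tkr tstar k + d / ε ≤ t ∧ t < tfin then ress κ tstar g k t j else 0

/-- Macroscopic single-interface initial data with scaling parameter ε. -/
def MacroData (κ ε α β : ℝ) (u0 : ℤ → ℝ) : Prop :=
  memX κ 1 u0 ∧
  ¬(-uStar κ < u0 1 ∧ u0 1 < uStar κ) ∧
  (∀ j : ℤ, |Phi' κ (u0 j)| ≤ α) ∧
  (∀ j : ℤ, |Phi' κ (u0 (j + 1)) - Phi' κ (u0 j)| ≤ α * ε) ∧
  (∀ j : ℤ, j ≠ 1 → |lap (fun i => Phi' κ (u0 i)) j| ≤ α * ε ^ 2) ∧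
  |lap (fun i => Phi' κ (u0 i)) 1| ≤ β * ε ∧
  (∀ j : ℤ, Phi' κ (u0 j) ≤ pStar κ + ε * β * max 0 (1 - (j : ℝ)))

/-- The number K_ε of phase transitions before the microscopic time tfin. -/
def Keps (tstar : ℕ → WithTop ℝ) (tfin : ℝ) : ℕ :=
  sSup {k : ℕ | 1 ≤ k ∧ tstar k ≤ (tfin : WithTop ℝ)}

/-- The lattice index j_ξ determined by ξ = ε (j_ξ + ζ) with ζ ∈ (-1/2, 1/2]. -/
def jIdx (ε ξ : ℝ) : ℤ := ⌈ξ / ε - 1 / 2⌉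

/-- The piecewise constant macroscopic field P_ε. -/
def Pf (κ : ℝ) (u : ℝ → ℤ → ℝ) (ε τ ξ : ℝ) : ℝ := Phi' κ (u (τ / ε ^ 2) (jIdx ε ξ))

/-- The piecewise constant macroscopic field U_ε. -/
def Uf (u : ℝ → ℤ → ℝ) (ε τ ξ : ℝ) : ℝ := u (τ / ε ^ 2) (jIdx ε ξ)

/-- The discrete interface curve Ξ_ε^*. -/
def XiStar (tstar : ℕ → WithTop ℝ) (ε τ : ℝ) : ℝ :=
  ε * ((sInf {k : ℕ | 1 ≤ k ∧ ((τ / ε ^ 2 : ℝ) : WithTop ℝ) < tstar k} : ℕ) : ℝ)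

/-- The discrete interface curve Ξ_ε^#. -/
def XiSharp (κ : ℝ) (u : ℝ → ℤ → ℝ) (tstar : ℕ → WithTop ℝ) (ε τ : ℝ) : ℝ :=
  ε * ((sInf {k : ℕ | 1 ≤ k ∧ τ / ε ^ 2 < tsharp κ u tstar k} : ℕ) : ℝ)

/-- The approximate macroscopic phase field M_ε. -/
def Mf (κ : ℝ) (u : ℝ → ℤ → ℝ) (tstar : ℕ → WithTop ℝ) (ε τ ξ : ℝ) : ℝ :=
  if XiSharp κ u tstar ε τ < ξ then -1
  else if ξ < XiStar tstar ε τ then 1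
  else 0

/-- The scaled forward difference ∇_{+ε} P_ε. -/
def gradP (κ : ℝ) (u : ℝ → ℤ → ℝ) (ε τ ξ : ℝ) : ℝ :=
  (Phi' κ (u (τ / ε ^ 2) (jIdx ε ξ + 1)) - Phi' κ (u (τ / ε ^ 2) (jIdx ε ξ))) / ε

/-!
At a transition time `tk` the state is a limit of states in `X_k` (from the left) and in `X_{k+1}`
(from the right); this gives `u_k(tk) = uStar κ` and `u̇_k(tk) ≥ 0`. A zero exit speed would pin
`Φ'(u(tk))` at its minimum `-pStar κ` on all of `ℤ`, a state that a solution staying above it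
cannot leave, contradicting the entry into `X_{k+1}`. A maximum principle bounds `Φ'(u)` from above
uniformly in time, so the next interface site climbs from `-uStar κ` to `uStar κ` at bounded
speed: this is the waiting time. Hence transition times do not accumulate, and every `t > 0` lies
inside a phase, where the entrance condition is read off the Laplacian at the interface site, or
is a transition time, where a site at `-uStar κ` with nonnegative speed is impossible.
-/

section Constitutive

variable {κ : ℝ}

lemma uStar_pos (hκ : 0 < κ) : 0 < uStar κ := by unfold uStar; positivity

lemma pStar_pos (hκ : 0 < κ) : 0 < pStar κ := by unfold pStar; positivity

lemma uStar_add_pStar (hκ : 0 < κ) : uStar κ + pStar κ = 1 := by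
  unfold uStar pStar; field_simp

lemma uStarStar_eq_one_add_pStar (hκ : 0 < κ) : uStarStar κ = 1 + pStar κ := by
  unfold uStarStar pStar; field_simp; ring

lemma mul_uStar (hκ : 0 < κ) : κ * uStar κ = pStar κ := by
  unfold uStar pStar; field_simp

lemma Phi'_of_le_neg_uStar {x : ℝ} (hx : x ≤ -uStar κ) : Phi' κ x = x + 1 := if_pos hx

lemma Phi'_of_uStar_le (hκ : 0 < κ) {x : ℝ} (hx : uStar κ ≤ x) : Phi' κ x = x - 1 := by
  have := uStar_pos hκ
  rw [Phi', if_neg (by linarith), if_pos hx]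

lemma Phi'_of_mem_Ioo {x : ℝ} (hx : x ∈ Ioo (-uStar κ) (uStar κ)) : Phi' κ x = -κ * x := by
  rw [Phi', if_neg (not_le.2 hx.1), if_neg (not_le.2 hx.2)]

lemma Phi'_eq_max_min (hκ : 0 < κ) (x : ℝ) :
    Phi' κ x = max (min (x + 1) (-κ * x)) (x - 1) := by
  have hu := uStar_pos hκ
  have h1 : uStar κ * (1 + κ) = 1 := by unfold uStar; field_simp
  rcases le_or_gt x (-uStar κ) with hx | hx
  · rw [Phi'_of_le_neg_uStar hx, min_eq_left (by nlinarith), max_eq_left (by linarith)]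
  rcases lt_or_ge x (uStar κ) with hx' | hx'
  · rw [Phi'_of_mem_Ioo ⟨hx, hx'⟩, min_eq_right (by nlinarith), max_eq_left (by nlinarith)]
  · rw [Phi'_of_uStar_le hκ hx', min_eq_right (by nlinarith), max_eq_right (by nlinarith)]

lemma Phi'_le_add_one (hκ : 0 < κ) (x : ℝ) : Phi' κ x ≤ x + 1 := by
  have := uStar_pos hκ
  rw [Phi'_eq_max_min hκ]
  exact max_le (min_le_left _ _) (by linarith)

lemma sub_one_le_Phi' (hκ : 0 < κ) (x : ℝ) : x - 1 ≤ Phi' κ x := by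
  rw [Phi'_eq_max_min hκ]
  exact le_max_right _ _

/-- `x ↦ x - Φ'(x)` is the clamp of `(1 + κ) x` to `[-1, 1]`. -/
lemma Phi'_sub_Phi'_le (hκ : 0 < κ) {x y : ℝ} (hxy : x ≤ y) :
    Phi' κ y - Phi' κ x ≤ y - x := by
  rw [Phi'_eq_max_min hκ, Phi'_eq_max_min hκ]
  simp only [max_def, min_def]
  split_ifs <;> nlinarith

lemma Phi'_le_pStar (hκ : 0 < κ) {x : ℝ} (hx : x ≤ uStar κ) : Phi' κ x ≤ pStar κ := by
  have := uStar_add_pStar hκ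
  have := mul_uStar hκ
  rcases le_or_gt x (-uStar κ) with h | h
  · rw [Phi'_of_le_neg_uStar h]; linarith
  rcases lt_or_ge x (uStar κ) with h' | h'
  · rw [Phi'_of_mem_Ioo ⟨h, h'⟩]; nlinarith
  · rw [Phi'_of_uStar_le hκ h']; linarith [pStar_pos hκ]

lemma Phi'_le_max (hκ : 0 < κ) (x : ℝ) : Phi' κ x ≤ max (pStar κ) (x - 1) := by
  rcases le_or_gt x (uStar κ) with h | h
  · exact (Phi'_le_pStar hκ h).trans (le_max_left _ _)
  · exact (Phi'_of_uStar_le hκ h.le).le.trans (le_max_right _ _)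

lemma neg_pStar_le_Phi' (hκ : 0 < κ) {x : ℝ} (hx : -uStarStar κ ≤ x) : -pStar κ ≤ Phi' κ x := by
  have := uStar_add_pStar hκ
  have := mul_uStar hκ
  have := uStarStar_eq_one_add_pStar hκ
  rcases le_or_gt x (-uStar κ) with h | h
  · rw [Phi'_of_le_neg_uStar h]; linarith
  rcases lt_or_ge x (uStar κ) with h' | h'
  · rw [Phi'_of_mem_Ioo ⟨h, h'⟩]; nlinarith
  · rw [Phi'_of_uStar_le hκ h']; linarith

lemma Phi'_uStar (hκ : 0 < κ) : Phi' κ (uStar κ) = -pStar κ := by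
  rw [Phi'_of_uStar_le hκ le_rfl]; linarith [uStar_add_pStar hκ]

lemma Phi'_neg_uStar (hκ : 0 < κ) : Phi' κ (-uStar κ) = pStar κ := by
  rw [Phi'_of_le_neg_uStar le_rfl]; linarith [uStar_add_pStar hκ]

lemma eq_uStar_of_Phi'_eq (hκ : 0 < κ) {x : ℝ} (hx : uStar κ ≤ x)
    (hp : Phi' κ x = -pStar κ) : x = uStar κ := by
  rw [Phi'_of_uStar_le hκ hx] at hp; linarith [uStar_add_pStar hκ]

lemma eq_neg_uStarStar_of_Phi'_eq (hκ : 0 < κ) {x : ℝ} (hx : x ≤ -uStar κ)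
    (hp : Phi' κ x = -pStar κ) : x = -uStarStar κ := by
  rw [Phi'_of_le_neg_uStar hx] at hp; linarith [uStarStar_eq_one_add_pStar hκ]

lemma eq_neg_uStar_of_Phi'_eq (hκ : 0 < κ) {x : ℝ} (hx : x ≤ -uStar κ)
    (hp : Phi' κ x = pStar κ) : x = -uStar κ := by
  rw [Phi'_of_le_neg_uStar hx] at hp; linarith [uStar_add_pStar hκ]

lemma uStarStar_lt_of_pStar_lt_Phi' (hκ : 0 < κ) {x : ℝ} (hp : pStar κ < Phi' κ x) :
    uStarStar κ < x := by
  have hx : uStar κ < x := not_le.1 fun h => (Phi'_le_pStar hκ h).not_gt hp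
  rw [Phi'_of_uStar_le hκ hx.le] at hp
  linarith [uStarStar_eq_one_add_pStar hκ]

lemma lap_Phi'_le (hκ : 0 < κ) (v : ℤ → ℝ) (j : ℤ) :
    lap (fun i => Phi' κ (v i)) j ≤ v (j + 1) + v (j - 1) - 2 * v j + 4 := by
  unfold lap
  linarith [Phi'_le_add_one hκ (v (j + 1)), Phi'_le_add_one hκ (v (j - 1)),
    sub_one_le_Phi' hκ (v j)]

lemma le_lap_Phi' (hκ : 0 < κ) (v : ℤ → ℝ) (j : ℤ) :
    v (j + 1) + v (j - 1) - 2 * v j - 4 ≤ lap (fun i => Phi' κ (v i)) j := by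
  unfold lap
  linarith [sub_one_le_Phi' hκ (v (j + 1)), sub_one_le_Phi' hκ (v (j - 1)),
    Phi'_le_add_one hκ (v j)]

end Constitutive

section Calculus

lemma le_of_forall_mem_Ioo_left {f g : ℝ → ℝ} {a x : ℝ} (hf : ContinuousAt f x)
    (hg : ContinuousAt g x) (hax : a < x) (h : ∀ s ∈ Ioo a x, f s ≤ g s) : f x ≤ g x :=
  hf.continuousWithinAt.closure_le (by rw [closure_Ioo hax.ne]; exact ⟨hax.le, le_rfl⟩)
    hg.continuousWithinAt h

lemma le_of_forall_mem_Ioo_right {f g : ℝ → ℝ} {x b : ℝ} (hf : ContinuousAt f x)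
    (hg : ContinuousAt g x) (hxb : x < b) (h : ∀ s ∈ Ioo x b, f s ≤ g s) : f x ≤ g x :=
  hf.continuousWithinAt.closure_le (by rw [closure_Ioo hxb.ne]; exact ⟨le_rfl, hxb.le⟩)
    hg.continuousWithinAt h

lemma HasDerivAt.nonneg_of_le_on_Ioo_left {f : ℝ → ℝ} {f' a x : ℝ} (hf : HasDerivAt f f' x)
    (hax : a < x) (h : ∀ s ∈ Ioo a x, f s ≤ f x) : 0 ≤ f' := by
  have hslope : Tendsto (slope f x) (𝓝[<] x) (𝓝 f') :=
    (hasDerivAt_iff_tendsto_slope.1 hf).mono_left (nhdsWithin_mono _ fun _ hs => ne_of_lt hs)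
  refine ge_of_tendsto hslope ?_
  filter_upwards [Ioo_mem_nhdsLT hax] with s hs
  rw [slope_def_field]
  exact div_nonneg_of_nonpos (by linarith [h s hs]) (by linarith [hs.2])

lemma HasDerivAt.eq_zero_of_le_on_Ioo {f : ℝ → ℝ} {f' a b x : ℝ} (hf : HasDerivAt f f' x)
    (hax : a < x) (hxb : x < b) (h : ∀ s ∈ Ioo a b, f s ≤ f x) : f' = 0 :=
  IsLocalMax.hasDerivAt_eq_zero (Filter.eventually_of_mem (Ioo_mem_nhds hax hxb) h) hf

lemma HasDerivAt.eq_zero_of_ge_on_Ioo {f : ℝ → ℝ} {f' a b x : ℝ} (hf : HasDerivAt f f' x)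
    (hax : a < x) (hxb : x < b) (h : ∀ s ∈ Ioo a b, f x ≤ f s) : f' = 0 :=
  IsLocalMin.hasDerivAt_eq_zero (Filter.eventually_of_mem (Ioo_mem_nhds hax hxb) h) hf

lemma sub_le_sub_of_hasDerivAt_le {f g f' g' : ℝ → ℝ} {a b : ℝ} (hab : a ≤ b)
    (hf : ∀ x ∈ Icc a b, HasDerivAt f (f' x) x) (hg : ∀ x ∈ Icc a b, HasDerivAt g (g' x) x)
    (h : ∀ x ∈ Icc a b, f' x ≤ g' x) : f b - f a ≤ g b - g a := by
  have := image_le_of_deriv_right_le_deriv_boundary (B := fun x => g x - g a + f a)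
    (fun x hx => (hf x hx).continuousAt.continuousWithinAt)
    (fun x hx => (hf x (Ico_subset_Icc_self hx)).hasDerivWithinAt) (by simp)
    (fun x hx => ((hg x hx).continuousAt.sub continuousAt_const).add continuousAt_const
      |>.continuousWithinAt)
    (fun x hx => (((hg x (Ico_subset_Icc_self hx)).sub_const _).add_const _).hasDerivWithinAt)
    (fun x hx => h x (Ico_subset_Icc_self hx)) ⟨hab, le_rfl⟩
  linarith

lemma hasDerivAt_exp_mul_sub (c a x : ℝ) :
    HasDerivAt (fun y => Real.exp (c * (y - a))) (c * Real.exp (c * (x - a))) x := by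
  simpa [mul_comm] using (((hasDerivAt_id x).sub_const a).const_mul c).exp

lemma eq_zero_of_forall_lt_imp_le_mul {ι : Type*} {f : ι → ℝ} {c : ℝ} (hc : c < 1)
    (hf0 : ∀ i, 0 ≤ f i) (hbdd : BddAbove (range f))
    (h : ∀ S, (∀ i, f i < S) → ∀ i, f i ≤ c * S) (i : ι) : f i = 0 := by
  have : Nonempty ι := ⟨i⟩
  set M := ⨆ i, f i
  have hfM : ∀ i, f i ≤ M := fun i => le_ciSup hbdd i
  have hM0 : 0 ≤ M := (hf0 i).trans (hfM i)
  have hMε : ∀ ε > 0, M ≤ c * (M + ε) := fun ε hε =>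
    ciSup_le (h (M + ε) fun i => (hfM i).trans_lt (by linarith))
  have hM : M ≤ 0 := by
    rcases le_or_gt c 0 with hc0 | hc0
    · nlinarith [hMε 1 one_pos]
    · by_contra! hMpos
      have := hMε ((1 - c) * M / (2 * c)) (by positivity)
      have hcε : c * ((1 - c) * M / (2 * c)) = (1 - c) * M / 2 := by field_simp
      nlinarith
  exact le_antisymm ((hfM i).trans hM) (hf0 i)

lemma eq_zero_of_forall_lt_mul_imp_le_half_mul {ι : Type*} {s : Set ℝ} {F : ι → ℝ → ℝ}
    {ω : ℝ → ℝ} (hω : ∀ t ∈ s, 1 ≤ ω t) (hF0 : ∀ t ∈ s, ∀ j, 0 ≤ F j t)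
    (hbdd : ∃ B, ∀ t ∈ s, ∀ j, F j t ≤ B)
    (h : ∀ S, (∀ x ∈ s, ∀ j, F j x < S * ω x) → ∀ t ∈ s, ∀ j, F j t ≤ S / 2 * ω t) :
    ∀ t ∈ s, ∀ j, F j t = 0 := by
  have hωpos : ∀ t ∈ s, 0 < ω t := fun t ht => one_pos.trans_le (hω t ht)
  obtain ⟨B, hB⟩ := hbdd
  let f : ι × s → ℝ := fun i => F i.1 i.2 / ω i.2
  have hf0 : ∀ i, 0 ≤ f i := fun i => div_nonneg (hF0 _ i.2.2 _) (hωpos _ i.2.2).le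
  have hbdd : BddAbove (range f) := by
    refine ⟨max B 0, ?_⟩
    rintro _ ⟨⟨j, t, ht⟩, rfl⟩
    rw [div_le_iff₀ (hωpos t ht)]
    nlinarith [hB t ht j, hω t ht, le_max_left B 0, le_max_right B 0]
  intro t ht j
  have := eq_zero_of_forall_lt_imp_le_mul (c := 1 / 2) (by norm_num) hf0 hbdd
    (fun S hS i => by
      have := h S (fun x hx j => (div_lt_iff₀ (hωpos x hx)).1 (hS (j, ⟨x, hx⟩))) i.2 i.2.2 i.1
      rw [div_le_iff₀ (hωpos _ i.2.2)]
      linarith) (j, ⟨t, ht⟩)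
  simpa [f, (hωpos t ht).ne'] using this

end Calculus

section PhaseSpace

variable {κ : ℝ} {n j : ℤ} {w : ℤ → ℝ}

lemma memX.uStar_lt (hw : memX κ n w) (hj : j < n) : uStar κ < w j := by
  obtain ⟨⟨c, hc, hcj⟩, -⟩ := hw
  exact hc.trans_le (hcj j hj)

lemma memX.lt_neg_uStar (hw : memX κ n w) (hj : n < j) : w j < -uStar κ := by
  obtain ⟨-, -, -, ⟨C, hC, hCj⟩, -⟩ := hw
  exact (hCj j hj).trans_lt hC

lemma memX.lt_uStar (hw : memX κ n w) : w n < uStar κ := hw.2.2.2.2.2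

lemma memX.neg_uStarStar_lt (hκ : 0 < κ) (hw : memX κ n w) (j : ℤ) : -uStarStar κ < w j := by
  have := uStarStar_eq_one_add_pStar hκ
  have := uStar_add_pStar hκ
  have := uStar_pos hκ
  rcases lt_trichotomy j n with h | rfl | h
  · linarith [hw.uStar_lt h]
  · exact hw.2.2.2.2.1
  · obtain ⟨-, -, ⟨c, hc, hcj⟩, -⟩ := hw
    exact hc.trans_le (hcj j h)

end PhaseSpace

namespace LatticeSol

variable {κ : ℝ} {u : ℝ → ℤ → ℝ}

lemma continuousAt (hu : LatticeSol κ u) {t : ℝ} (ht : 0 ≤ t) (j : ℤ) :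
    ContinuousAt (fun s => u s j) t :=
  (hu.1 t ht j).continuousAt

lemma hasDerivAt_exp_mul (hu : LatticeSol κ u) {a L t : ℝ} (ht : 0 ≤ t) (j : ℤ) :
    HasDerivAt (fun s => Real.exp (2 * (s - a)) * (u s j - L))
      (Real.exp (2 * (t - a)) * (lap (fun i => Phi' κ (u t i)) j + 2 * (u t j - L))) t :=
  ((hasDerivAt_exp_mul_sub 2 a t).mul ((hu.1 t ht j).sub_const L)).congr_deriv (by ring)

/-- Because of the lower bound, `z_j = e^{2(s-a)} (u_j - L)` satisfies `u̇_j ≤ ż_j + K` and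
`ż_j ≥ -K` for a constant `K`, so `u_j(t)` is controlled by `z_j(b)`, i.e. by `‖u(b)‖_∞`. -/
lemma exists_upper_bound (hu : LatticeSol κ u) (hκ : 0 < κ) {a b L : ℝ} (ha : 0 ≤ a)
    (hab : a ≤ b) (hL : ∀ s ∈ Icc a b, ∀ j, L ≤ u s j) :
    ∃ B, ∀ s ∈ Icc a b, ∀ j, u s j ≤ B := by
  obtain ⟨Cb, hCb⟩ := hu.2 b (ha.trans hab)
  set E := Real.exp (2 * (b - a))
  have hE : 1 ≤ E := Real.one_le_exp (by linarith)
  refine ⟨L + E * (Cb - L) + (8 * E + 4) * (b - a), fun t ht j => ?_⟩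
  set z := fun s => Real.exp (2 * (s - a)) * (u s j - L)
  set W := fun s => (u s (j + 1) - L) + (u s (j - 1) - L)
  have hz : ∀ x ∈ Icc a b, HasDerivAt z
      (Real.exp (2 * (x - a)) * (lap (fun i => Phi' κ (u x i)) j + 2 * (u x j - L))) x :=
    fun x hx => hu.hasDerivAt_exp_mul (ha.trans hx.1) j
  have hz' : ∀ x ∈ Icc a b, W x - 4 * E ≤
      Real.exp (2 * (x - a)) * (lap (fun i => Phi' κ (u x i)) j + 2 * (u x j - L)) := by
    intro x hx
    have h1 : 1 ≤ Real.exp (2 * (x - a)) := Real.one_le_exp (by linarith [hx.1])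
    have h2 : Real.exp (2 * (x - a)) ≤ E := Real.exp_le_exp.2 (by linarith [hx.2])
    have hW : 0 ≤ W x := by linarith [hL x hx (j + 1), hL x hx (j - 1)]
    have := le_lap_Phi' hκ (u x) j
    nlinarith
  have hup : u t j - u a j ≤ (z t + (4 * E + 4) * t) - (z a + (4 * E + 4) * a) :=
    sub_le_sub_of_hasDerivAt_le ht.1 (fun x hx => hu.1 x (ha.trans hx.1) j)
      (fun x hx => (hz x ⟨hx.1, hx.2.trans ht.2⟩).add ((hasDerivAt_id x).const_mul _))
      fun x hx => by
        have hx' : x ∈ Icc a b := ⟨hx.1, hx.2.trans ht.2⟩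
        have := lap_Phi'_le hκ (u x) j
        have := hz' x hx'
        simp only [mul_one]
        linarith [hL x hx' j]
  have hdown : -z b - -z t ≤ 4 * E * b - 4 * E * t :=
    sub_le_sub_of_hasDerivAt_le ht.2 (fun x hx => (hz x ⟨ht.1.trans hx.1, hx.2⟩).neg)
      (fun x _ => (hasDerivAt_id x).const_mul _)
      fun x hx => by
        have hx' : x ∈ Icc a b := ⟨ht.1.trans hx.1, hx.2⟩
        have := hz' x hx'
        simp only [mul_one]
        linarith [hL x hx' (j + 1), hL x hx' (j - 1)]
  have hza : z a = u a j - L := by simp [z]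
  have hzb : z b ≤ E * (Cb - L) :=
    mul_le_mul_of_nonneg_left (by linarith [le_abs_self (u b j), hCb j]) (by positivity)
  nlinarith [ht.1, ht.2]

/-- Compare `u_j` with the barrier `A + 1 + S/2 (e^{4(t-a)} - 1)`: where they touch, `u_j` lies
on the branch `Φ'(u) = u - 1` and its speed is below that of the barrier. -/
lemma Phi'_sub_le_of_neighbours (hu : LatticeSol κ u) (hκ : 0 < κ) {a b A S : ℝ} (ha : 0 ≤ a)
    (hA : pStar κ ≤ A) (hS : 0 ≤ S)
    (hnb : ∀ x ∈ Icc a b, ∀ i, Phi' κ (u x i) - A < S * Real.exp (4 * (x - a)))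
    {j : ℤ} (h0 : Phi' κ (u a j) ≤ A) :
    ∀ t ∈ Icc a b, Phi' κ (u t j) - A ≤ S / 2 * (Real.exp (4 * (t - a)) - 1) := by
  have hB : ∀ x, HasDerivAt (fun y => A + 1 + S / 2 * (Real.exp (4 * (y - a)) - 1))
      (S / 2 * (4 * Real.exp (4 * (x - a)))) x := fun x =>
    (((hasDerivAt_exp_mul_sub 4 a x).sub_const 1).const_mul _).const_add _
  have hbarrier := image_le_of_deriv_right_lt_deriv_boundary (a := a) (b := b)
    (fun x hx => (hu.continuousAt (ha.trans hx.1) j).continuousWithinAt)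
    (fun x hx => (hu.1 x (ha.trans hx.1) j).hasDerivWithinAt)
    (by simp only [sub_self, mul_zero, Real.exp_zero]; linarith [sub_one_le_Phi' hκ (u a j)])
    hB fun x hx hux => by
      have he : 1 ≤ Real.exp (4 * (x - a)) := Real.one_le_exp (by linarith [hx.1])
      have hp : Phi' κ (u x j) = u x j - 1 := by
        refine Phi'_of_uStar_le hκ ?_
        rw [hux]
        nlinarith [uStar_add_pStar hκ, pStar_pos hκ]
      have := hnb x (Ico_subset_Icc_self hx) (j + 1)
      have := hnb x (Ico_subset_Icc_self hx) (j - 1)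
      unfold lap
      nlinarith
  intro t ht
  have he : 1 ≤ Real.exp (4 * (t - a)) := Real.one_le_exp (by linarith [ht.1])
  have := hbarrier ht
  have := Phi'_le_max hκ (u t j)
  cases max_cases (pStar κ) (u t j - 1) <;> nlinarith

/-- Maximum principle. With the weight `e^{-4(t-a)}` the barrier estimate improves every strict
upper bound of the excess `(Φ'(u) - A)⁺` by a factor `1/2`, on intervals of any length. -/
lemma Phi'_le_of_Phi'_le (hu : LatticeSol κ u) (hκ : 0 < κ) {a b L A : ℝ} (ha : 0 ≤ a)
    (hab : a ≤ b) (hL : ∀ s ∈ Icc a b, ∀ j, L ≤ u s j) (hA : pStar κ ≤ A)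
    (h0 : ∀ j, Phi' κ (u a j) ≤ A) : ∀ t ∈ Icc a b, ∀ j, Phi' κ (u t j) ≤ A := by
  obtain ⟨B, hB⟩ := hu.exists_upper_bound hκ ha hab hL
  have hω : ∀ t ∈ Icc a b, 1 ≤ Real.exp (4 * (t - a)) := fun t ht =>
    Real.one_le_exp (by linarith [ht.1])
  have := eq_zero_of_forall_lt_mul_imp_le_half_mul (F := fun j t => max (Phi' κ (u t j) - A) 0)
    hω (fun _ _ _ => le_max_right _ _)
    ⟨max (B + 1 - A) 0, fun t ht j =>
      max_le_max (by linarith [Phi'_le_add_one hκ (u t j), hB t ht j]) le_rfl⟩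
    fun S hS t ht j => by
      have hS0 : 0 ≤ S := by simpa using ((le_max_right _ 0).trans_lt (hS a ⟨le_rfl, hab⟩ j)).le
      have := hu.Phi'_sub_le_of_neighbours hκ ha hA hS0
        (fun x hx i => (le_max_left _ _).trans_lt (hS x hx i)) (h0 j) t ht
      exact max_le (by linarith) (by nlinarith [hω t ht])
  intro t ht j
  simpa using this t ht j

/-- Since `x ↦ x - Φ'(x)` is monotone, `w = u - u(a) ≥ 0` satisfies `ẇ_j ≤ w_{j+1} + w_{j-1}`,
and the weighted supremum of `w` contracts as in the maximum principle. -/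
lemma eq_of_Phi'_eq_const (hu : LatticeSol κ u) (hκ : 0 < κ) {a b c : ℝ} (ha : 0 ≤ a)
    (hab : a ≤ b) (hc : ∀ j, Phi' κ (u a j) = c) (hcle : ∀ s ∈ Icc a b, ∀ j, c ≤ Phi' κ (u s j))
    (hle : ∀ s ∈ Icc a b, ∀ j, u a j ≤ u s j) : ∀ s ∈ Icc a b, ∀ j, u s j = u a j := by
  obtain ⟨Ca, hCa⟩ := hu.2 a ha
  have hCa' : ∀ j, -Ca ≤ u a j := fun j => neg_le_of_abs_le (hCa j)
  obtain ⟨B, hB⟩ := hu.exists_upper_bound hκ ha hab fun s hs j => (hCa' j).trans (hle s hs j)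
  have hω : ∀ t ∈ Icc a b, 1 ≤ Real.exp (4 * (t - a)) := fun t ht =>
    Real.one_le_exp (by linarith [ht.1])
  have := eq_zero_of_forall_lt_mul_imp_le_half_mul (F := fun j t => u t j - u a j) hω
    (fun t ht j => sub_nonneg.2 (hle t ht j))
    ⟨B + Ca, fun t ht j => by linarith [hB t ht j, hCa' j]⟩
    fun S hS t ht j => by
      have hrate : ∀ x ∈ Icc a t,
          lap (fun i => Phi' κ (u x i)) j ≤ S / 2 * (4 * Real.exp (4 * (x - a))) := by
        intro x hx
        have hx' : x ∈ Icc a b := ⟨hx.1, hx.2.trans ht.2⟩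
        have h1 := Phi'_sub_Phi'_le hκ (hle x hx' (j + 1))
        have h2 := Phi'_sub_Phi'_le hκ (hle x hx' (j - 1))
        have := hS x hx' (j + 1)
        have := hS x hx' (j - 1)
        rw [hc] at h1 h2
        unfold lap
        linarith [hcle x hx' j]
      have := sub_le_sub_of_hasDerivAt_le ht.1 (fun x hx => hu.1 x (ha.trans hx.1) j)
        (fun x _ => (hasDerivAt_exp_mul_sub 4 a x).const_mul (S / 2)) hrate
      simp only [sub_self, mul_zero, Real.exp_zero] at this
      have : 0 < S := by simpa using hS a ⟨le_rfl, hab⟩ j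
      linarith
  exact fun s hs j => sub_eq_zero.1 (this s hs j)

end LatticeSol

namespace IsSIS

variable {κ : ℝ} {u : ℝ → ℤ → ℝ} {tstar : ℕ → WithTop ℝ}

lemma nonneg_of_tstar_eq (h : IsSIS κ u tstar) {k : ℕ} {tk : ℝ} (htk : tstar k = tk) :
    0 ≤ tk := by
  have := h.mono (Nat.zero_le k)
  rw [h.t0, htk] at this
  exact_mod_cast this

lemma memX_of_lt_of_lt (h : IsSIS κ u tstar) {k : ℕ} (hk : 1 ≤ k) {a s : ℝ}
    (ha : tstar (k - 1) = a) (has : a < s) (hs : (s : WithTop ℝ) < tstar k) :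
    memX κ k (u s) :=
  h.phase k hk (ha ▸ WithTop.coe_ne_top) s (ha ▸ WithTop.coe_lt_coe.2 has) hs

lemma tstar_pred_lt (h : IsSIS κ u tstar) {k : ℕ} (hk : 1 ≤ k) {tk : ℝ}
    (htk : tstar k = tk) : tstar (k - 1) < tstar k := by
  obtain rfl | hk2 := hk.eq_or_lt
  · simpa [h.t0] using h.pos 1 le_rfl
  obtain hc | hc := h.step (k - 1) (by omega)
  · have := h.mono (Nat.sub_le k 1)
    simp [hc, htk] at this
  · rwa [Nat.sub_add_cancel hk] at hc

lemma exists_window (h : IsSIS κ u tstar) {k : ℕ} (hk : 1 ≤ k) {tk : ℝ} (htk : tstar k = tk) :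
    ∃ a b : ℝ, 0 ≤ a ∧ a < tk ∧ tk < b ∧ (b : WithTop ℝ) ≤ tstar (k + 1) ∧
      (∀ s ∈ Ioo a tk, memX κ k (u s)) ∧ (∀ s ∈ Ioo tk b, memX κ (k + 1) (u s)) := by
  have hpred := h.tstar_pred_lt hk htk
  obtain ⟨a, ha⟩ := WithTop.ne_top_iff_exists.1 (hpred.trans_le le_top).ne
  have hnext : tstar k < tstar (k + 1) := (h.step k hk).resolve_left (by simp [htk])
  obtain ⟨c, hkc, hc⟩ := exists_between hnext
  obtain ⟨b, rfl⟩ := WithTop.ne_top_iff_exists.1 (hc.trans_le le_top).ne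
  rw [htk] at hpred hkc
  refine ⟨a, b, h.nonneg_of_tstar_eq ha.symm, by rw [← ha] at hpred; exact_mod_cast hpred,
    by exact_mod_cast hkc, hc.le, fun s hs => ?_, fun s hs => ?_⟩
  · exact h.memX_of_lt_of_lt hk ha.symm hs.1 (htk ▸ WithTop.coe_lt_coe.2 hs.2)
  · have := h.memX_of_lt_of_lt (k := k + 1) (by omega) (by simpa using htk) hs.1
      ((WithTop.coe_lt_coe.2 hs.2).trans hc)
    exact_mod_cast this

lemma uStar_le_u_of_tstar_eq (h : IsSIS κ u tstar) {k : ℕ} (hk : 1 ≤ k) {tk : ℝ}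
    (htk : tstar k = tk) {j : ℤ} (hj : j ≤ k) : uStar κ ≤ u tk j := by
  obtain ⟨a, b, -, -, hb, -, -, hR⟩ := h.exists_window hk htk
  exact le_of_forall_mem_Ioo_right continuousAt_const
    (h.sol.continuousAt (h.nonneg_of_tstar_eq htk) j) hb
    fun s hs => ((hR s hs).uStar_lt (by omega)).le

lemma u_le_neg_uStar_of_tstar_eq (h : IsSIS κ u tstar) {k : ℕ} (hk : 1 ≤ k) {tk : ℝ}
    (htk : tstar k = tk) {j : ℤ} (hj : k < j) : u tk j ≤ -uStar κ := by
  obtain ⟨a, b, -, ha, -, -, hL, -⟩ := h.exists_window hk htk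
  exact le_of_forall_mem_Ioo_left (h.sol.continuousAt (h.nonneg_of_tstar_eq htk) j)
    continuousAt_const ha fun s hs => ((hL s hs).lt_neg_uStar hj).le

lemma u_eq_uStar_of_tstar_eq (h : IsSIS κ u tstar) {k : ℕ} (hk : 1 ≤ k) {tk : ℝ}
    (htk : tstar k = tk) : u tk k = uStar κ := by
  obtain ⟨a, b, -, ha, -, -, hL, -⟩ := h.exists_window hk htk
  refine le_antisymm ?_ (h.uStar_le_u_of_tstar_eq hk htk le_rfl)
  exact le_of_forall_mem_Ioo_left (h.sol.continuousAt (h.nonneg_of_tstar_eq htk) k)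
    continuousAt_const ha fun s hs => (hL s hs).lt_uStar.le

lemma neg_uStarStar_le (h : IsSIS κ u tstar) (hκ : 0 < κ) (h0 : memX κ 1 (u 0)) {t : ℝ}
    (ht : 0 ≤ t) {m : ℕ} (htm : (t : WithTop ℝ) ≤ tstar m) (j : ℤ) : -uStarStar κ ≤ u t j := by
  obtain rfl | ht := ht.eq_or_lt
  · exact (h0.neg_uStarStar_lt hκ j).le
  classical
  have hex : ∃ k, (t : WithTop ℝ) ≤ tstar k := ⟨m, htm⟩
  set k := Nat.find hex
  have hk : 1 ≤ k := Nat.one_le_iff_ne_zero.2 fun hk0 => by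
    have : (t : WithTop ℝ) ≤ tstar k := Nat.find_spec hex
    rw [hk0, h.t0] at this
    exact ht.not_ge (by exact_mod_cast this)
  have hpred : tstar (k - 1) < t := not_le.1 (Nat.find_min hex (by omega))
  obtain ⟨a, ha⟩ := WithTop.ne_top_iff_exists.1 (hpred.trans_le le_top).ne
  rw [← ha] at hpred
  exact le_of_forall_mem_Ioo_left continuousAt_const (h.sol.continuousAt ht.le j)
    (by exact_mod_cast hpred) fun s hs => (h.memX_of_lt_of_lt hk ha.symm hs.1
      ((WithTop.coe_lt_coe.2 hs.2).trans_le (Nat.find_spec hex))).neg_uStarStar_lt hκ j |>.le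

lemma exists_Phi'_le (h : IsSIS κ u tstar) (hκ : 0 < κ) (h0 : memX κ 1 (u 0)) :
    ∃ A, pStar κ ≤ A ∧ ∀ t : ℝ, 0 ≤ t → ∀ m, (t : WithTop ℝ) ≤ tstar m →
      ∀ j, Phi' κ (u t j) ≤ A := by
  obtain ⟨C, hC⟩ := h.sol.2 0 le_rfl
  refine ⟨max (C + 1) (pStar κ), le_max_right _ _, fun t ht m htm j => ?_⟩
  refine h.sol.Phi'_le_of_Phi'_le hκ le_rfl ht
    (fun s hs => h.neg_uStarStar_le hκ h0 hs.1 ((WithTop.coe_le_coe.2 hs.2).trans htm))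
    (le_max_right _ _) (fun i => ?_) t ⟨ht, le_rfl⟩ j
  exact (Phi'_le_add_one hκ _).trans
    (le_max_of_le_left (by linarith [le_abs_self (u 0 i), hC i]))

/-- While `Φ'(u)` stays in `[-pStar κ, A]`, `u̇_{k+1} ≤ 2 (A + pStar κ)`, so site `k + 1` needs
time `uStar κ / (A + pStar κ)` to climb from `-uStar κ` to `uStar κ`. -/
lemma exists_pos_waiting_time (h : IsSIS κ u tstar) (hκ : 0 < κ) (h0 : memX κ 1 (u 0)) :
    ∃ C : ℝ, 0 < C ∧ ∀ k : ℕ, 1 ≤ k → ∀ tk : ℝ, tstar k = (tk : WithTop ℝ) →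
      ((tk + C : ℝ) : WithTop ℝ) ≤ tstar (k + 1) := by
  obtain ⟨A, hA, hAu⟩ := h.exists_Phi'_le hκ h0
  have hus := uStar_pos hκ
  have hps := pStar_pos hκ
  have hApos : 0 < A + pStar κ := by linarith
  refine ⟨uStar κ / (A + pStar κ), by positivity, fun k hk tk htk => ?_⟩
  rcases eq_or_ne (tstar (k + 1)) ⊤ with hT | hT
  · simp [hT]
  obtain ⟨T, hT⟩ := WithTop.ne_top_iff_exists.1 hT
  rw [← hT]
  have htk0 := h.nonneg_of_tstar_eq htk
  have htkT : tk ≤ T := by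
    have := h.mono (Nat.le_succ k)
    rw [htk, ← hT] at this
    exact_mod_cast this
  have hstart : u tk (k + 1) ≤ -uStar κ := h.u_le_neg_uStar_of_tstar_eq hk htk (by omega)
  have hend : u T (k + 1) = uStar κ := by
    exact_mod_cast h.u_eq_uStar_of_tstar_eq (by omega) hT.symm
  have hclimb := sub_le_sub_of_hasDerivAt_le htkT
    (fun x hx => h.sol.1 x (htk0.trans hx.1) ((k : ℤ) + 1))
    (fun x _ => (hasDerivAt_id x).const_mul (2 * (A + pStar κ))) fun x hx => by
      have hx0 : 0 ≤ x := htk0.trans hx.1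
      have hxT : (x : WithTop ℝ) ≤ tstar (k + 1) := hT ▸ WithTop.coe_le_coe.2 hx.2
      have := hAu x hx0 _ hxT ((k : ℤ) + 1 + 1)
      have := hAu x hx0 _ hxT ((k : ℤ) + 1 - 1)
      have := neg_pStar_le_Phi' hκ (h.neg_uStarStar_le hκ h0 hx0 hxT ((k : ℤ) + 1))
      unfold lap
      simp only [mul_one]
      linarith
  rw [WithTop.coe_le_coe, ← le_sub_iff_add_le', div_le_iff₀ hApos]
  simp only [id] at hclimb
  nlinarith

lemma lap_nonneg_of_tstar_eq (h : IsSIS κ u tstar) {k : ℕ} (hk : 1 ≤ k) {tk : ℝ}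
    (htk : tstar k = tk) : 0 ≤ lap (fun i => Phi' κ (u tk i)) k := by
  obtain ⟨a, b, -, ha, -, -, hL, -⟩ := h.exists_window hk htk
  refine (h.sol.1 tk (h.nonneg_of_tstar_eq htk) k).nonneg_of_le_on_Ioo_left ha fun s hs => ?_
  rw [h.u_eq_uStar_of_tstar_eq hk htk]
  exact (hL s hs).lt_uStar.le

/-- Where `Φ'(u_j(tk)) = -pStar κ`, `u_j(tk)` is `uStar κ` (left of the interface) or
`-uStarStar κ` (right of it): the least value the neighbouring phases allow at site `j`. -/
lemma u_tstar_le_of_Phi'_eq (h : IsSIS κ u tstar) (hκ : 0 < κ) {k : ℕ} (hk : 1 ≤ k)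
    {tk a b : ℝ} (htk : tstar k = tk) (hL : ∀ s ∈ Ioo a tk, memX κ k (u s))
    (hR : ∀ s ∈ Ioo tk b, memX κ (k + 1) (u s)) {j : ℤ} (hj : Phi' κ (u tk j) = -pStar κ)
    {s : ℝ} (hs : s ∈ Ioo a b) (hjs : j ≠ k ∨ tk ≤ s) : u tk j ≤ u s j := by
  obtain hst | rfl | hst := lt_trichotomy s tk
  · have hsL := hL s ⟨hs.1, hst⟩
    rcases lt_or_gt_of_ne (hjs.resolve_right hst.not_ge) with hjk | hjk
    · rw [eq_uStar_of_Phi'_eq hκ (h.uStar_le_u_of_tstar_eq hk htk hjk.le) hj]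
      exact (hsL.uStar_lt hjk).le
    · rw [eq_neg_uStarStar_of_Phi'_eq hκ (h.u_le_neg_uStar_of_tstar_eq hk htk hjk) hj]
      exact (hsL.neg_uStarStar_lt hκ j).le
  · exact le_rfl
  · have hsR := hR s ⟨hst, hs.2⟩
    rcases le_or_gt j k with hjk | hjk
    · rw [eq_uStar_of_Phi'_eq hκ (h.uStar_le_u_of_tstar_eq hk htk hjk) hj]
      exact (hsR.uStar_lt (by omega)).le
    · rw [eq_neg_uStarStar_of_Phi'_eq hκ (h.u_le_neg_uStar_of_tstar_eq hk htk hjk) hj]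
      exact (hsR.neg_uStarStar_lt hκ j).le

/-- Every site where `Φ'(u(tk))` attains its minimum `-pStar κ` is at a minimum in time, so its
Laplacian vanishes and the minimum spreads to both neighbours. -/
lemma Phi'_eq_neg_pStar_of_lap_eq_zero (h : IsSIS κ u tstar) (hκ : 0 < κ) (h0 : memX κ 1 (u 0))
    {k : ℕ} (hk : 1 ≤ k) {tk : ℝ} (htk : tstar k = tk)
    (hlap : lap (fun i => Phi' κ (u tk i)) k = 0) (j : ℤ) : Phi' κ (u tk j) = -pStar κ := by
  obtain ⟨a, b, -, ha, hb, -, hL, hR⟩ := h.exists_window hk htk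
  have htk0 := h.nonneg_of_tstar_eq htk
  have hmin : ∀ i, -pStar κ ≤ Phi' κ (u tk i) := fun i =>
    neg_pStar_le_Phi' hκ (h.neg_uStarStar_le hκ h0 htk0 htk.ge i)
  have hspread : ∀ i, Phi' κ (u tk i) = -pStar κ →
      Phi' κ (u tk (i + 1)) = -pStar κ ∧ Phi' κ (u tk (i - 1)) = -pStar κ := by
    intro i hi
    have hlap_i : lap (fun i => Phi' κ (u tk i)) i = 0 := by
      rcases eq_or_ne i k with rfl | hik
      · exact hlap
      exact (h.sol.1 tk htk0 i).eq_zero_of_ge_on_Ioo ha hb fun s hs =>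
        h.u_tstar_le_of_Phi'_eq hκ hk htk hL hR hi hs (Or.inl hik)
    unfold lap at hlap_i
    constructor <;> linarith [hmin (i + 1), hmin (i - 1)]
  induction j using Int.inductionOn' (b := k) with
  | zero => rw [h.u_eq_uStar_of_tstar_eq hk htk, Phi'_uStar hκ]
  | succ i _ hi => exact (hspread i hi).1
  | pred i _ hi => exact (hspread i hi).2

/-- With zero exit speed, `Φ'(u(tk)) ≡ -pStar κ` and the solution could not move up after `tk`,
contradicting `u(s) ∈ X_{k+1}`. -/
lemma lap_pos_of_tstar_eq (h : IsSIS κ u tstar) (hκ : 0 < κ) (h0 : memX κ 1 (u 0)) {k : ℕ}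
    (hk : 1 ≤ k) {tk : ℝ} (htk : tstar k = tk) : 0 < lap (fun i => Phi' κ (u tk i)) k := by
  refine (h.lap_nonneg_of_tstar_eq hk htk).lt_of_ne fun hlap => ?_
  have hpin := h.Phi'_eq_neg_pStar_of_lap_eq_zero hκ h0 hk htk hlap.symm
  obtain ⟨a, b, -, ha, hb, hbk, hL, hR⟩ := h.exists_window hk htk
  have htk0 := h.nonneg_of_tstar_eq htk
  obtain ⟨b', hb'⟩ := exists_between hb
  have hIcc : ∀ s ∈ Icc tk b', s ∈ Ioo a b := fun s hs =>
    ⟨ha.trans_le hs.1, hs.2.trans_lt hb'.2⟩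
  have hstill := h.sol.eq_of_Phi'_eq_const hκ htk0 hb'.1.le hpin
    (fun s hs j => neg_pStar_le_Phi' hκ (h.neg_uStarStar_le hκ h0 (htk0.trans hs.1)
      ((WithTop.coe_le_coe.2 (hs.2.trans hb'.2.le)).trans hbk) j))
    (fun s hs j => h.u_tstar_le_of_Phi'_eq hκ hk htk hL hR (hpin j) (hIcc s hs) (Or.inr hs.1))
    b' ⟨hb'.1.le, le_rfl⟩ k
  have := (hR b' hb').uStar_lt (j := k) (by omega)
  rw [hstill, h.u_eq_uStar_of_tstar_eq hk htk] at this
  exact this.false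

/-- A site `j + 1 > m + 1` sitting at `-uStar κ` is at a maximum in time, which pins its left
neighbour at `-uStar κ` with nonnegative speed; descending to `m + 1` gives a contradiction. -/
lemma lap_neg_of_tstar_eq (h : IsSIS κ u tstar) (hκ : 0 < κ) {m : ℕ} (hm : 1 ≤ m) {tm : ℝ}
    (htm : tstar m = tm) {j : ℤ} (hj : m < j) (hu : u tm j = -uStar κ) :
    lap (fun i => Phi' κ (u tm i)) j < 0 := by
  obtain ⟨a, b, -, ha, hb, -, hL, hR⟩ := h.exists_window hm htm
  have htm0 := h.nonneg_of_tstar_eq htm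
  have hps := pStar_pos hκ
  have hright : ∀ i : ℤ, m < i → Phi' κ (u tm i) ≤ pStar κ := fun i hi =>
    Phi'_le_pStar hκ <|
      (h.u_le_neg_uStar_of_tstar_eq hm htm hi).trans (by linarith [uStar_pos hκ])
  induction j, (show (m : ℤ) + 1 ≤ j by omega) using Int.leInduction with
  | base =>
    have := hright (m + 1 + 1) (by omega)
    simp only [lap]
    rw [hu, Phi'_neg_uStar hκ, add_sub_cancel_right, h.u_eq_uStar_of_tstar_eq hm htm,
      Phi'_uStar hκ]
    linarith
  | succ j hmj ih =>
    exfalso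
    have hlap : lap (fun i => Phi' κ (u tm i)) (j + 1) = 0 :=
      (h.sol.1 tm htm0 (j + 1)).eq_zero_of_le_on_Ioo ha hb fun s hs => by
        rw [hu]
        obtain hst | rfl | hst := lt_trichotomy s tm
        · exact ((hL s ⟨hs.1, hst⟩).lt_neg_uStar (by omega)).le
        · exact hu.le
        · exact ((hR s ⟨hst, hs.2⟩).lt_neg_uStar (by omega)).le
    have hpj : Phi' κ (u tm j) = pStar κ := by
      have := hright (j + 1 + 1) (by omega)
      have := hright j (by omega)
      simp only [lap] at hlap
      rw [hu, Phi'_neg_uStar hκ, add_sub_cancel_right] at hlap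
      linarith
    have huj := eq_neg_uStar_of_Phi'_eq hκ (h.u_le_neg_uStar_of_tstar_eq hm htm (by omega)) hpj
    have := (h.sol.1 tm htm0 j).nonneg_of_le_on_Ioo_left ha fun s hs => by
      rw [huj]
      exact ((hL s hs).lt_neg_uStar (by omega)).le
    linarith [ih (by omega) huj]

lemma exists_lt_tstar (h : IsSIS κ u tstar) {C : ℝ} (hC : 0 < C)
    (hwait : ∀ k : ℕ, 1 ≤ k → ∀ tk : ℝ, tstar k = (tk : WithTop ℝ) →
      ((tk + C : ℝ) : WithTop ℝ) ≤ tstar (k + 1)) (t : ℝ) :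
    ∃ m, (t : WithTop ℝ) < tstar m := by
  have hgrow : ∀ n : ℕ, ((n * C : ℝ) : WithTop ℝ) ≤ tstar (n + 1) := by
    intro n
    induction n with
    | zero => simpa using (h.pos 1 le_rfl).le
    | succ n ih =>
      rcases eq_or_ne (tstar (n + 1)) ⊤ with htop | hne
      · exact (htop ▸ h.mono (Nat.le_succ _) : ⊤ ≤ _).trans' le_top
      obtain ⟨s, hs⟩ := WithTop.ne_top_iff_exists.1 hne
      refine le_trans ?_ (hwait (n + 1) (by omega) s hs.symm)
      rw [← hs, WithTop.coe_le_coe] at ih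
      push_cast
      exact_mod_cast (by linarith : ((n : ℝ) + 1) * C ≤ s + C)
  obtain ⟨n, hn⟩ := exists_nat_gt (t / C)
  refine ⟨n + 1, lt_of_lt_of_le ?_ (hgrow n)⟩
  exact_mod_cast (div_lt_iff₀ hC).1 hn

lemma uStarStar_lt_of_lap_nonneg (h : IsSIS κ u tstar) (hκ : 0 < κ) {C : ℝ} (hC : 0 < C)
    (hwait : ∀ k : ℕ, 1 ≤ k → ∀ tk : ℝ, tstar k = (tk : WithTop ℝ) →
      ((tk + C : ℝ) : WithTop ℝ) ≤ tstar (k + 1))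
    {k : ℕ} {t : ℝ} (ht : 0 < t) (hu : u t k = -uStar κ)
    (hlap : 0 ≤ lap (fun i => Phi' κ (u t i)) k) : uStarStar κ < u t (k - 1) := by
  classical
  have hex := h.exists_lt_tstar hC hwait t
  set M := Nat.find hex
  have hM : (t : WithTop ℝ) < tstar M := Nat.find_spec hex
  have hM1 : 1 ≤ M := Nat.one_le_iff_ne_zero.2 fun hM0 => by
    rw [hM0, h.t0] at hM
    exact ht.not_gt (by exact_mod_cast hM)
  have hpred : tstar (M - 1) ≤ t := not_lt.1 (Nat.find_min hex (by omega))
  obtain ⟨a, ha⟩ := WithTop.ne_top_iff_exists.1 (hpred.trans_lt (WithTop.coe_lt_top t)).ne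
  rw [← ha, WithTop.coe_le_coe] at hpred
  have hus := uStar_pos hκ
  obtain rfl | hat := hpred.eq_or_lt
  · have hm : 1 ≤ M - 1 := Nat.one_le_iff_ne_zero.2 fun hm0 => by
      rw [hm0, h.t0] at ha
      exact ht.ne' (by exact_mod_cast ha)
    have hkm : ((M - 1 : ℕ) : ℤ) < k := by
      by_contra! hkm
      linarith [h.uStar_le_u_of_tstar_eq hm ha.symm hkm]
    linarith [h.lap_neg_of_tstar_eq hκ hm ha.symm hkm hu]
  have hX := h.memX_of_lt_of_lt hM1 ha.symm hat hM
  have hkM : k = M := by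
    by_contra hkM
    rcases lt_or_gt_of_ne hkM with hkM | hkM
    · linarith [hX.uStar_lt (j := k) (by exact_mod_cast hkM)]
    · linarith [hX.lt_neg_uStar (j := k) (by exact_mod_cast hkM)]
  rw [← hkM] at hX
  have hnext : Phi' κ (u t (k + 1)) < pStar κ := by
    rw [Phi'_of_le_neg_uStar (hX.lt_neg_uStar (by omega)).le]
    linarith [hX.lt_neg_uStar (j := k + 1) (by omega), uStar_add_pStar hκ]
  simp only [lap] at hlap
  rw [hu, Phi'_neg_uStar hκ] at hlap
  exact uStarStar_lt_of_pStar_lt_Phi' hκ (by linarith)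

end IsSIS

/-- exit and entrance conditions plus a positive lower bound for the waiting
time between consecutive phase transitions. -/
theorem stmt1 (κ : ℝ) (hκ : 0 < κ) (u : ℝ → ℤ → ℝ) (tstar : ℕ → WithTop ℝ)
    (h : IsSIS κ u tstar) (h0 : memX κ 1 (u 0)) :
    (∃ C : ℝ, 0 < C ∧ ∀ k : ℕ, 1 ≤ k → ∀ tk : ℝ, tstar k = (tk : WithTop ℝ) →
      u tk (k : ℤ) = uStar κ ∧
      0 < lap (fun i => Phi' κ (u tk i)) (k : ℤ) ∧
      ((tk + C : ℝ) : WithTop ℝ) ≤ tstar (k + 1)) ∧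
    (∀ k : ℕ, 1 ≤ k → ∀ t : ℝ, 0 < t → u t (k : ℤ) = -uStar κ →
      0 ≤ lap (fun i => Phi' κ (u t i)) (k : ℤ) →
      uStarStar κ < u t ((k : ℤ) - 1)) := by
  obtain ⟨C, hC, hwait⟩ := h.exists_pos_waiting_time hκ h0
  exact ⟨⟨C, hC, fun k hk tk htk => ⟨h.u_eq_uStar_of_tstar_eq hk htk,
      h.lap_pos_of_tstar_eq hκ h0 hk htk, hwait k hk tk htk⟩⟩,
    fun k _ t ht hu hlap => h.uStarStar_lt_of_lap_nonneg hκ hC hwait ht hu hlap⟩
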